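/- arXiv:2002.07217 — 2 statements merged into one kernel-verified Lean document; each statement's English description precedes it below -/
import Mathlib

section
/- Consider the pPCA model on ℝ^q (latent) and ℝ^p (observed): prior p(z) = Normal(0, I_q) and conditional likelihood p(x|z) = Normal(Wz + μ, σ²I_p), with W a p×q real matrix, μ ∈ ℝ^p, σ > 0. Let M = WᵀW + σ²I_q. Then for every x ∈ ℝ^p, the posterior distribution of z given x is the Gaussian distribution p(z|x) = Normal(M⁻¹Wᵀ(x − μ), σ²M⁻¹); in particular M is invertible. -/
open MeasureTheory Matrix

/-- Density at `z` of the Gaussian distribution `Normal(m, S)` on `ℝ^d`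
(with positive-definite covariance matrix `S`). -/
noncomputable def gaussPdf {d : ℕ} (m : Fin d → ℝ) (S : Matrix (Fin d) (Fin d) ℝ)
    (z : Fin d → ℝ) : ℝ :=
  (2 * Real.pi) ^ (-(d : ℝ) / 2) * S.det ^ (-(1 : ℝ) / 2) *
    Real.exp (-((z - m) ⬝ᵥ S⁻¹.mulVec (z - m)) / 2)

/-!
Completing the square, `σ² ‖z‖² + ‖x - μ - W z‖² = (z - m)ᵀ M (z - m) + c(x)` with
`m = M⁻¹ Wᵀ (x - μ)`, shows that prior times likelihood is, as a function of `z`, a positive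
constant times the `Normal(m, σ² M⁻¹)` density; `M` is positive definite because `σ² > 0`.
Dividing by the evidence removes the constant since a Gaussian density integrates to one, which
follows from the substitution `z ↦ B z` with `S⁻¹ = Bᵀ B`.
-/

open Real

section GaussianIntegral

variable {ι : Type*} [Fintype ι]

theorem integral_comp_mulVec [DecidableEq ι] {E : Type*} [NormedAddCommGroup E]
    [NormedSpace ℝ E] (B : Matrix ι ι ℝ) (hB : B.det ≠ 0) (g : (ι → ℝ) → E) :
    ∫ z, g (B *ᵥ z) = |B.det|⁻¹ • ∫ u, g u := by
  have hdet : LinearMap.det (toLin' B) ≠ 0 := by rwa [LinearMap.det_toLin']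
  let e := ((toLin' B).equivOfDetNeZero hdet).toContinuousLinearEquiv
  calc ∫ z, g (B *ᵥ z) = ∫ u, g u ∂(volume.map (toLin' B)) :=
        (e.toHomeomorph.measurableEmbedding.integral_map g).symm
    _ = |B.det|⁻¹ • ∫ u, g u := by
      rw [Real.map_linearMap_volume_pi_eq_smul_volume_pi hdet, integral_smul_measure,
        LinearMap.det_toLin', abs_inv, ENNReal.toReal_ofReal (by positivity)]

theorem integral_exp_neg_dotProduct_self :
    ∫ u : ι → ℝ, exp (-(u ⬝ᵥ u) / 2) = (2 * π) ^ (Fintype.card ι / 2 : ℝ) := by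
  have hprod (u : ι → ℝ) : exp (-(u ⬝ᵥ u) / 2) = ∏ i, exp (-(1 / 2) * u i ^ 2) := by
    rw [← exp_sum]
    simp only [dotProduct, neg_div, Finset.sum_div, ← Finset.sum_neg_distrib]
    congr 1
    exact Finset.sum_congr rfl fun i _ => by ring
  simp_rw [hprod]
  rw [integral_fintype_prod_volume_eq_pow (fun x : ℝ => exp (-(1 / 2) * x ^ 2)),
    integral_gaussian, show π / (1 / 2) = 2 * π by ring, sqrt_eq_rpow,
    ← rpow_natCast, ← rpow_mul (by positivity)]
  ring_nf

open scoped MatrixOrder in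
theorem integral_exp_neg_dotProduct_mulVec [DecidableEq ι] {A : Matrix ι ι ℝ} (hA : A.PosDef) :
    ∫ z : ι → ℝ, exp (-(z ⬝ᵥ A *ᵥ z) / 2) =
      (2 * π) ^ (Fintype.card ι / 2 : ℝ) * A.det ^ (-(1 : ℝ) / 2) := by
  obtain ⟨B, hAB⟩ : ∃ B : Matrix ι ι ℝ, A = Bᵀ * B := by
    obtain ⟨B, hB⟩ := CStarAlgebra.nonneg_iff_eq_star_mul_self.mp hA.posSemidef.nonneg
    exact ⟨B, hB⟩
  have hdet : A.det = B.det ^ 2 := by rw [hAB, det_mul, det_transpose, sq]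
  have hB : B.det ≠ 0 := fun h => hA.det_pos.ne' (by rw [hdet, h, sq, mul_zero])
  have hquad (z : ι → ℝ) : z ⬝ᵥ A *ᵥ z = B *ᵥ z ⬝ᵥ B *ᵥ z := by
    rw [hAB, ← mulVec_mulVec, dotProduct_mulVec, vecMul_transpose]
  simp_rw [hquad]
  rw [integral_comp_mulVec B hB (fun u => exp (-(u ⬝ᵥ u) / 2)),
    integral_exp_neg_dotProduct_self, hdet, neg_div, rpow_neg (sq_nonneg _),
    ← sqrt_eq_rpow, sqrt_sq_eq_abs, smul_eq_mul, mul_comm]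

end GaussianIntegral

theorem gaussPdf_pos {d : ℕ} (m : Fin d → ℝ) {S : Matrix (Fin d) (Fin d) ℝ} (hS : 0 < S.det)
    (z : Fin d → ℝ) : 0 < gaussPdf m S z := by
  unfold gaussPdf
  positivity

theorem gaussPdf_smul_inv {d : ℕ} (m : Fin d → ℝ) {s : ℝ} (hs : s ≠ 0)
    {A : Matrix (Fin d) (Fin d) ℝ} (hA : IsUnit A.det) (z : Fin d → ℝ) :
    gaussPdf m (s • A⁻¹) z =
      gaussPdf 0 (s • A⁻¹) 0 * exp (-(s⁻¹ * ((z - m) ⬝ᵥ A *ᵥ (z - m))) / 2) := by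
  have hinv : (s • A⁻¹)⁻¹ = s⁻¹ • A := inv_eq_left_inv <| by
    rw [smul_mul_smul_comm, inv_mul_cancel₀ hs, mul_nonsing_inv A hA, one_smul]
  simp only [gaussPdf, hinv, sub_zero, mulVec_zero, dotProduct_zero, neg_zero, zero_div, exp_zero,
    mul_one, smul_mulVec, dotProduct_smul, smul_eq_mul]

theorem gaussPdf_smul_one {d : ℕ} (m : Fin d → ℝ) {s : ℝ} (hs : s ≠ 0) (z : Fin d → ℝ) :
    gaussPdf m (s • 1) z =
      gaussPdf (0 : Fin d → ℝ) (s • 1) 0 * exp (-(s⁻¹ * ((z - m) ⬝ᵥ (z - m))) / 2) := by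
  simpa only [inv_one, one_mulVec] using gaussPdf_smul_inv m hs (A := 1) (by simp) z

theorem integral_gaussPdf {d : ℕ} (m : Fin d → ℝ) {S : Matrix (Fin d) (Fin d) ℝ}
    (hS : S.PosDef) : ∫ z, gaussPdf m S z = 1 := by
  have hdet := hS.det_pos
  unfold gaussPdf
  rw [integral_const_mul,
    integral_sub_right_eq_self (fun z => exp (-(z ⬝ᵥ S⁻¹ *ᵥ z) / 2)) m,
    integral_exp_neg_dotProduct_mulVec hS.inv, det_nonsing_inv, Ring.inverse_eq_inv',
    inv_rpow hdet.le, Fintype.card_fin, neg_div, rpow_neg (by positivity)]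
  have h2π : 0 < (2 * π) ^ (d / 2 : ℝ) := by positivity
  have hdet' : 0 < S.det ^ (-1 / 2 : ℝ) := by positivity
  field_simp

section CompleteSquare

variable {R n m : Type*} [CommRing R] [Fintype n] [DecidableEq n] [Fintype m]

theorem dotProduct_mulVec_completeSquare {M : Matrix n n R} (hM : Mᵀ = M)
    (hMdet : IsUnit M.det) (b z : n → R) :
    (z - M⁻¹ *ᵥ b) ⬝ᵥ M *ᵥ (z - M⁻¹ *ᵥ b) =
      z ⬝ᵥ M *ᵥ z - 2 * (b ⬝ᵥ z) + b ⬝ᵥ M⁻¹ *ᵥ b := by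
  have hMb : M *ᵥ M⁻¹ *ᵥ b = b := by rw [mulVec_mulVec, mul_nonsing_inv _ hMdet, one_mulVec]
  have hcross : M⁻¹ *ᵥ b ⬝ᵥ M *ᵥ z = b ⬝ᵥ z := by
    rw [dotProduct_mulVec, ← mulVec_transpose, hM, hMb]
  rw [mulVec_sub, dotProduct_sub, sub_dotProduct, sub_dotProduct, hMb, hcross,
    dotProduct_comm z b, dotProduct_comm _ b]
  ring

theorem smul_dotProduct_self_add_residual_eq (W : Matrix m n R) (s : R) {M : Matrix n n R}
    (hM : Wᵀ * W + s • 1 = M) (hMdet : IsUnit M.det) (y : m → R) (z : n → R) :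
    s * (z ⬝ᵥ z) + (y - W *ᵥ z) ⬝ᵥ (y - W *ᵥ z) =
      (z - M⁻¹ *ᵥ Wᵀ *ᵥ y) ⬝ᵥ M *ᵥ (z - M⁻¹ *ᵥ Wᵀ *ᵥ y) +
        (y ⬝ᵥ y - Wᵀ *ᵥ y ⬝ᵥ M⁻¹ *ᵥ Wᵀ *ᵥ y) := by
  subst hM
  have hMt : (Wᵀ * W + s • 1)ᵀ = Wᵀ * W + s • 1 := by simp [transpose_mul]
  have hyW : y ⬝ᵥ W *ᵥ z = Wᵀ *ᵥ y ⬝ᵥ z := by rw [dotProduct_mulVec, ← mulVec_transpose]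
  have hMz : z ⬝ᵥ (Wᵀ * W + s • 1) *ᵥ z = W *ᵥ z ⬝ᵥ W *ᵥ z + s * (z ⬝ᵥ z) := by
    rw [add_mulVec, dotProduct_add, ← mulVec_mulVec, dotProduct_mulVec, vecMul_transpose,
      smul_mulVec, one_mulVec, dotProduct_smul, smul_eq_mul]
  rw [dotProduct_mulVec_completeSquare hMt hMdet, hMz, dotProduct_sub, sub_dotProduct,
    sub_dotProduct, hyW, dotProduct_comm (W *ᵥ z) y, hyW]
  ring

end CompleteSquare

theorem posDef_transpose_mul_add_smul_one {m n : Type*} [Fintype m] [Fintype n] [DecidableEq n]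
    (W : Matrix m n ℝ) {s : ℝ} (hs : 0 < s) : (Wᵀ * W + s • 1).PosDef :=
  (PosDef.one.smul hs).posSemidef_add (by simpa using posSemidef_conjTranspose_mul_self W)

theorem ppca_joint_eq_const_mul_posterior {p q : ℕ} (W : Matrix (Fin p) (Fin q) ℝ)
    (μ : Fin p → ℝ) {σ : ℝ} (hσ : 0 < σ) (x : Fin p → ℝ) :
    let M := Wᵀ * W + σ ^ 2 • (1 : Matrix (Fin q) (Fin q) ℝ)
    ∃ D ≠ 0, ∀ z, gaussPdf 0 1 z * gaussPdf (W *ᵥ z + μ) (σ ^ 2 • 1) x =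
      D * gaussPdf (M⁻¹ *ᵥ Wᵀ *ᵥ (x - μ)) (σ ^ 2 • M⁻¹) z := by
  intro M
  have hs : σ ^ 2 ≠ 0 := by positivity
  have hM := posDef_transpose_mul_add_smul_one W (pow_pos hσ 2)
  have hMdet : IsUnit M.det := (isUnit_iff_isUnit_det M).mp hM.isUnit
  have hprior (z : Fin q → ℝ) :
      gaussPdf 0 1 z = gaussPdf (0 : Fin q → ℝ) 1 0 * exp (-(z ⬝ᵥ z) / 2) := by
    simpa only [one_smul, sub_zero, inv_one, one_mul] using gaussPdf_smul_one 0 one_ne_zero z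
  have hlik (z : Fin q → ℝ) := gaussPdf_smul_one (W *ᵥ z + μ) hs x
  simp only [sub_add_eq_sub_sub_swap] at hlik
  have hpost (z : Fin q → ℝ) := gaussPdf_smul_inv (M⁻¹ *ᵥ Wᵀ *ᵥ (x - μ)) hs hMdet z
  have hsq := smul_dotProduct_self_add_residual_eq W (σ ^ 2) (M := M) rfl hMdet (x - μ)
  set b := Wᵀ *ᵥ (x - μ)
  have hc₁ : 0 < gaussPdf (0 : Fin q → ℝ) 1 0 := gaussPdf_pos _ (by simp) _
  have hc₂ : 0 < gaussPdf (0 : Fin p → ℝ) (σ ^ 2 • 1) 0 :=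
    gaussPdf_pos _ (PosDef.one.smul (pow_pos hσ 2)).det_pos _
  have hc₃ : 0 < gaussPdf (0 : Fin q → ℝ) (σ ^ 2 • M⁻¹) 0 :=
    gaussPdf_pos _ (hM.inv.smul (pow_pos hσ 2)).det_pos _
  refine ⟨gaussPdf (0 : Fin q → ℝ) 1 0 * gaussPdf (0 : Fin p → ℝ) (σ ^ 2 • 1) 0 *
      exp (-((σ ^ 2)⁻¹ * ((x - μ) ⬝ᵥ (x - μ) - b ⬝ᵥ M⁻¹ *ᵥ b)) / 2) /
      gaussPdf (0 : Fin q → ℝ) (σ ^ 2 • M⁻¹) 0, by positivity, fun z => ?_⟩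
  have hexp : exp (-(z ⬝ᵥ z) / 2) *
        exp (-((σ ^ 2)⁻¹ * ((x - μ - W *ᵥ z) ⬝ᵥ (x - μ - W *ᵥ z))) / 2) =
      exp (-((σ ^ 2)⁻¹ * ((x - μ) ⬝ᵥ (x - μ) - b ⬝ᵥ M⁻¹ *ᵥ b)) / 2) *
        exp (-((σ ^ 2)⁻¹ * ((z - M⁻¹ *ᵥ b) ⬝ᵥ M *ᵥ (z - M⁻¹ *ᵥ b))) / 2) := by
    rw [← exp_add, ← exp_add]
    congr 1
    field_simp
    linear_combination -hsq z
  rw [hprior, hlik, hpost, mul_mul_mul_comm, hexp]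
  field_simp

/-- pPCA posterior: with prior `p(z) = Normal(0, I_q)` and likelihood
`p(x|z) = Normal(Wz + μ, σ²I_p)`, setting `M = WᵀW + σ²I_q`, the matrix `M` is
invertible and for every `x` the posterior of `z` given `x` is the Gaussian
`Normal(M⁻¹Wᵀ(x − μ), σ²M⁻¹)`. -/
theorem pPCA_posterior
    (p q : ℕ) (W : Matrix (Fin p) (Fin q) ℝ) (μ : Fin p → ℝ) (σ : ℝ) (hσ : 0 < σ) :
    IsUnit (Wᵀ * W + σ ^ 2 • (1 : Matrix (Fin q) (Fin q) ℝ)) ∧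
    ∀ (x : Fin p → ℝ) (z : Fin q → ℝ),
      gaussPdf 0 1 z * gaussPdf (W.mulVec z + μ) (σ ^ 2 • 1) x /
          (∫ z' : Fin q → ℝ,
            gaussPdf 0 1 z' * gaussPdf (W.mulVec z' + μ) (σ ^ 2 • 1) x) =
        gaussPdf
          ((Wᵀ * W + σ ^ 2 • (1 : Matrix (Fin q) (Fin q) ℝ))⁻¹.mulVec
            (Wᵀ.mulVec (x - μ)))
          (σ ^ 2 • (Wᵀ * W + σ ^ 2 • (1 : Matrix (Fin q) (Fin q) ℝ))⁻¹) z := by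
  have hM := posDef_transpose_mul_add_smul_one W (pow_pos hσ 2)
  refine ⟨hM.isUnit, fun x z => ?_⟩
  obtain ⟨D, hD, hjoint⟩ := ppca_joint_eq_const_mul_posterior W μ hσ x
  simp_rw [hjoint]
  rw [integral_const_mul, integral_gaussPdf _ (hM.inv.smul (pow_pos hσ 2)), mul_one,
    mul_div_cancel_left₀ _ hD]
end

section
/- Let p_θ(x, z) be a joint probability density over observed variable x and latent z, and q_φ(z|x) a probability density in z, mutually absolutely continuous with the posterior p_θ(z|x), such that E_{q_φ(z|x)}[(p_θ(x,z)/q_φ(z|x))²] < ∞. Then log p_θ(x) = (1/2)·log E_{q_φ(z|x)}[ (p_θ(x,z)/q_φ(z|x))² ] − (1/2)·log( 1 + χ²( p_θ(·|x) ‖ q_φ(·|x) ) ), where the first term is the χ upper bound (CUBO) and χ²(p‖q) = E_q[(p/q)²] − 1 is the chi-square divergence. -/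
open MeasureTheory

/-- CUBO decomposition of the evidence: if `pj` is the joint density `z ↦ p_θ(x, z)`
(for fixed `x`, with respect to a reference measure `ζ`) and `qd` is a probability
density (the variational distribution `q_φ(·|x)`), mutually absolutely continuous
with the posterior `p_θ(·|x) = pj/∫pj`, and `E_q[(p_θ(x,z)/q_φ(z|x))²] < ∞`, then
`log p_θ(x) = (1/2)·log E_q[(p_θ(x,z)/q_φ(z|x))²] − (1/2)·log(1 + χ²(p_θ(·|x) ‖ q_φ(·|x)))`,
where `χ²(p‖q) = E_q[(p/q)²] − 1`. -/
theorem cubo_decomposition {Z : Type*} [MeasurableSpace Z] (ζ : Measure Z)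
    (pj qd : Z → ℝ)
    (hpjm : Measurable pj) (hqdm : Measurable qd)
    (hpj0 : ∀ z, 0 ≤ pj z) (hqd0 : ∀ z, 0 ≤ qd z)
    (hqd1 : ∫ z, qd z ∂ζ = 1)
    (hpjint : Integrable pj ζ)
    (hpx : 0 < ∫ z, pj z ∂ζ)
    -- mutual absolute continuity of the posterior and the variational distribution
    (hac : ∀ᵐ z ∂ζ, (pj z = 0 ↔ qd z = 0))
    -- the second moment of the importance weights is finite
    (hsq : Integrable (fun z => qd z * (pj z / qd z) ^ 2) ζ) :
    Real.log (∫ z, pj z ∂ζ) =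
      1 / 2 * Real.log (∫ z, qd z * (pj z / qd z) ^ 2 ∂ζ) -
        1 / 2 *
          Real.log
            (1 + ((∫ z, qd z * ((pj z / ∫ z', pj z' ∂ζ) / qd z) ^ 2 ∂ζ) - 1)) := by
  set P := ∫ z, pj z ∂ζ with hP
  set S := ∫ z, qd z * (pj z / qd z) ^ 2 ∂ζ with hSdef
  have hnn : ∀ z, 0 ≤ qd z * (pj z / qd z) ^ 2 :=
    fun z => mul_nonneg (hqd0 z) (sq_nonneg _)
  have hSnn : 0 ≤ S := integral_nonneg hnn
  have hS : 0 < S := by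
    rcases hSnn.lt_or_eq with h | h
    · exact h
    · exfalso
      have h0 : (fun z => qd z * (pj z / qd z) ^ 2) =ᵐ[ζ] 0 :=
        (integral_eq_zero_iff_of_nonneg hnn hsq).mp h.symm
      have hpj : pj =ᵐ[ζ] 0 := by
        filter_upwards [h0, hac] with z hz hzac
        simp only [Pi.zero_apply] at hz ⊢
        by_cases hq : qd z = 0
        · exact hzac.mpr hq
        · rcases mul_eq_zero.mp hz with h1 | h1
          · exact absurd h1 hq
          · have h2 : pj z / qd z = 0 := by nlinarith [sq_nonneg (pj z / qd z)]
            rcases div_eq_zero_iff.mp h2 with h3 | h3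
            · exact h3
            · exact absurd h3 hq
      have : P = 0 := by rw [hP, integral_congr_ae hpj]; simp
      exact absurd this hpx.ne'
  have hT : (∫ z, qd z * ((pj z / P) / qd z) ^ 2 ∂ζ) = S / P ^ 2 := by
    rw [hSdef, ← integral_div]
    congr 1
    funext z
    rw [div_right_comm, div_pow, mul_div_assoc]
  rw [hT]
  have h1 : 1 + (S / P ^ 2 - 1) = S / P ^ 2 := by ring
  rw [h1, Real.log_div hS.ne' (pow_ne_zero 2 hpx.ne'), Real.log_pow]
  push_cast
  ring
end
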